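/- arXiv:1803.04747 — 8 statements merged into one kernel-verified Lean document; each statement's English description precedes it below -/
import Mathlib

section
/- Let X be a finite-dimensional real inner product space and let N ⊆ X be a nonempty compact set that is exhaustive, i.e., for every linear functional f : X → ℝ there exist x₊, x₋ ∈ N with f(x₊) ≥ 0 and f(x₋) ≤ 0. Then 0 belongs to the convex hull of N. -/
/-!
If `0 ∉ conv N`, then, `conv N` being compact (by Carathéodory it is a finite union of continuous
images of `stdSimplex × Nᵏ`), Hahn–Banach gives a functional `f` with `f 0 < u < f x` on all of
`conv N`, so `f > 0` on `N`, contradicting exhaustiveness.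
-/

/-- A set `N` is *exhaustive* if for every linear functional `f` there exist
elements `x₊, x₋ ∈ N` with `f x₊ ≥ 0` and `f x₋ ≤ 0`. -/
def IsExhaustive {X : Type*} [NormedAddCommGroup X] [InnerProductSpace ℝ X]
    (N : Set X) : Prop :=
  ∀ f : X →ₗ[ℝ] ℝ, (∃ x ∈ N, 0 ≤ f x) ∧ (∃ x ∈ N, f x ≤ 0)

open Module Set

theorem convexHull_eq_iUnion_image_stdSimplex {𝕜 E : Type*} [Field 𝕜] [LinearOrder 𝕜]
    [IsStrictOrderedRing 𝕜] [AddCommGroup E] [Module 𝕜 E] [FiniteDimensional 𝕜 E] (s : Set E) :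
    convexHull 𝕜 s = ⋃ k ∈ Finset.range (finrank 𝕜 E + 2),
      (fun p : (Fin k → 𝕜) × (Fin k → E) ↦ ∑ i, p.1 i • p.2 i) ''
        (stdSimplex 𝕜 (Fin k) ×ˢ univ.pi fun _ ↦ s) := by
  refine Subset.antisymm (fun x hx ↦ ?_) ?_
  · obtain ⟨ι, _, z, w, hzs, hz, hw₀, hw₁, rfl⟩ := eq_pos_convex_span_of_mem_convexHull hx
    have hcard : Fintype.card ι < finrank 𝕜 E + 2 :=
      (hz.card_le_finrank_succ.trans (by simpa using Submodule.finrank_le _)).trans_lt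
        (Nat.lt_succ_self _)
    let e := Fintype.equivFin ι
    refine mem_biUnion (Finset.mem_range.2 hcard) ⟨(w ∘ e.symm, z ∘ e.symm), ⟨⟨?_, ?_⟩, ?_⟩, ?_⟩
    · exact fun i ↦ (hw₀ _).le
    · simpa [e.symm.sum_comp w] using hw₁
    · exact fun i _ ↦ hzs (mem_range_self _)
    · exact e.symm.sum_comp fun i ↦ w i • z i
  · refine iUnion₂_subset fun k _ ↦ ?_
    rintro _ ⟨⟨w, z⟩, ⟨⟨hw₀, hw₁⟩, hz⟩, rfl⟩
    exact (convex_convexHull 𝕜 s).sum_mem (fun i _ ↦ hw₀ i) hw₁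
      fun i _ ↦ subset_convexHull 𝕜 s (hz i (mem_univ i))

theorem IsCompact.convexHull {E : Type*} [AddCommGroup E] [Module ℝ E] [TopologicalSpace E]
    [ContinuousAdd E] [ContinuousSMul ℝ E] [FiniteDimensional ℝ E] {s : Set E}
    (hs : IsCompact s) : IsCompact (convexHull ℝ s) := by
  rw [convexHull_eq_iUnion_image_stdSimplex]
  refine (Finset.range _).isCompact_biUnion fun k _ ↦ ?_
  refine ((isCompact_stdSimplex ℝ (Fin k)).prod (isCompact_univ_pi fun _ ↦ hs)).image ?_
  fun_prop

theorem zero_mem_convexHull_of_exhaustive_general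
    {X : Type*} [NormedAddCommGroup X] [InnerProductSpace ℝ X]
    [FiniteDimensional ℝ X]
    (N : Set X) (hcpt : IsCompact N)
    (hex : IsExhaustive N) :
    (0 : X) ∈ convexHull ℝ N := by
  by_contra h0
  obtain ⟨f, u, hf0, hfN⟩ := geometric_hahn_banach_point_closed (convex_convexHull ℝ N)
    hcpt.convexHull.isClosed h0
  obtain ⟨-, x, hxN, hfx⟩ := hex f.toLinearMap
  have hu : u < f x := hfN x (subset_convexHull ℝ N hxN)
  rw [map_zero] at hf0
  exact (hfx.trans_lt (hf0.trans hu)).false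

/-- **Lemma 1.** If `N` is a nonempty compact exhaustive subset of a
finite-dimensional real inner product space, then `0 ∈ conv N`. -/
theorem zero_mem_convexHull_of_exhaustive
    {X : Type*} [NormedAddCommGroup X] [InnerProductSpace ℝ X]
    [FiniteDimensional ℝ X]
    (N : Set X) (hne : N.Nonempty) (hcpt : IsCompact N)
    (hex : IsExhaustive N) :
    (0 : X) ∈ convexHull ℝ N :=
  zero_mem_convexHull_of_exhaustive_general N hcpt hex
end

section
/- Let ρ be a self-adjoint complex matrix indexed by (Fin m × Fin n), and let a ∈ ℂ^m, b ∈ ℂ^n be unit vectors. For the product vector a⊗b ∈ ℂ^{m·n} with components (a⊗b)_{(i,k)} = a_i b_k, define the reduced matrices ρ_b ∈ M_m(ℂ) by (ρ_b)_{ij} = Σ_{k,l} conj(b_k) ρ_{(i,k),(j,l)} b_l and ρ_a ∈ M_n(ℂ) by (ρ_a)_{kl} = Σ_{i,j} conj(a_i) ρ_{(i,k),(j,l)} a_j. Consider the real-valued function F(x, y) = ⟨x⊗y, ρ(x⊗y)⟩ / (⟨x,x⟩⟨y,y⟩) on pairs of nonzero vectors, with ℂ^m × ℂ^n regarded as a real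 normed space. Then the (real) Fréchet derivative of F at (a, b) is zero if and only if ρ_b a = g·a and ρ_a b = g·b, where g = ⟨a⊗b, ρ(a⊗b)⟩. -/
open scoped ComplexConjugate

/-!
Differentiate along the line `t ↦ (a + t u, b + t v)`. The numerator is the Hermitian form of
`ρ` at `(a + t u) ⊗ (b + t v)`, so its derivative at `0` is
`2 Re ⟨u ⊗ b + a ⊗ v, ρ (a ⊗ b)⟩ = 2 Re (⟨u, ρ_b a⟩ + ⟨v, ρ_a b⟩)`, and the denominator has
derivative `2 Re (⟨u, a⟩ + ⟨v, b⟩)`. As the denominator is `1` and the numerator is the real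
number `g` at `(a, b)`, the derivative in direction `(u, v)` is
`2 Re (⟨u, ρ_b a - g a⟩ + ⟨v, ρ_a b - g b⟩)`. Taking `u = ρ_b a - g a, v = 0` (and symmetrically)
shows that it vanishes for all directions iff both vectors vanish.
-/

open Matrix

section

variable {ι κ : Type*}

def prodVec (x : ι → ℂ) (y : κ → ℂ) : ι × κ → ℂ := fun p => x p.1 * y p.2

lemma HasDerivAt.prodVec {x : ℝ → ι → ℂ} {y : ℝ → κ → ℂ} {x' : ι → ℂ} {y' : κ → ℂ} {t : ℝ}
    (hx : HasDerivAt x x' t) (hy : HasDerivAt y y' t) :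
    HasDerivAt (fun t => prodVec (x t) (y t)) (prodVec x' (y t) + prodVec (x t) y') t :=
  hasDerivAt_pi.2 fun p => (hasDerivAt_pi.1 hx p.1).mul (hasDerivAt_pi.1 hy p.2)

variable [Fintype ι] [Fintype κ]

lemma sum_sum_conj_mul_mul_eq_star_dotProduct_mulVec (ρ : Matrix ι ι ℂ) (w : ι → ℂ) :
    ∑ p, ∑ q, conj (w p) * ρ p q * w q = star w ⬝ᵥ ρ *ᵥ w := by
  simp [dotProduct, mulVec, Finset.mul_sum, mul_assoc]

lemma Matrix.IsHermitian.re_star_dotProduct_mulVec_comm {ρ : Matrix ι ι ℂ} (hρ : ρ.IsHermitian)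
    (x y : ι → ℂ) : (star x ⬝ᵥ ρ *ᵥ y).re = (star y ⬝ᵥ ρ *ᵥ x).re := by
  rw [star_dotProduct, star_mulVec, ← dotProduct_mulVec, hρ.eq, Complex.star_def, Complex.conj_re]

lemma HasDerivAt.star_dotProduct_mulVec (ρ : Matrix ι ι ℂ) {w : ℝ → ι → ℂ} {w' : ι → ℂ} {t : ℝ}
    (hw : HasDerivAt w w' t) :
    HasDerivAt (fun t => star (w t) ⬝ᵥ ρ *ᵥ w t)
      (star w' ⬝ᵥ ρ *ᵥ w t + star (w t) ⬝ᵥ ρ *ᵥ w') t := by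
  have hcoord (i : ι) : HasDerivAt (fun t => w t i) (w' i) t := hasDerivAt_pi.1 hw i
  refine (HasDerivAt.fun_sum fun i _ => (hcoord i).star.fun_mul <|
    HasDerivAt.fun_sum fun j _ => (hcoord j).const_mul (ρ i j)).congr_deriv ?_
  simp [dotProduct, mulVec, Finset.sum_add_distrib]

lemma Matrix.IsHermitian.hasDerivAt_re_star_dotProduct_mulVec {ρ : Matrix ι ι ℂ}
    (hρ : ρ.IsHermitian) {w : ℝ → ι → ℂ} {w' : ι → ℂ} {t : ℝ} (hw : HasDerivAt w w' t) :
    HasDerivAt (fun t => (star (w t) ⬝ᵥ ρ *ᵥ w t).re) (2 * (star w' ⬝ᵥ ρ *ᵥ w t).re) t := by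
  refine (Complex.reCLM.hasFDerivAt.comp_hasDerivAt t (hw.star_dotProduct_mulVec ρ)).congr_deriv ?_
  simp [hρ.re_star_dotProduct_mulVec_comm (w t), two_mul]

lemma EuclideanSpace.norm_sq_eq_re_star_dotProduct (x : EuclideanSpace ℂ ι) :
    ‖x‖ ^ 2 = (star ⇑x ⬝ᵥ ⇑x).re := by
  rw [← inner_self_eq_norm_sq (𝕜 := ℂ), EuclideanSpace.inner_eq_star_dotProduct, dotProduct_comm]
  rfl

lemma EuclideanSpace.hasDerivAt_ofLp_add_smul (x y : EuclideanSpace ℂ ι) :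
    HasDerivAt (fun t : ℝ => ⇑(x + t • y)) ⇑y 0 := by
  simpa using ((hasDerivAt_id (0 : ℝ)).smul_const ⇑y).const_add ⇑x

lemma forall_re_star_dotProduct_add_eq_zero_iff (r : ι → ℂ) (s : κ → ℂ) :
    (∀ (u : EuclideanSpace ℂ ι) (v : EuclideanSpace ℂ κ), (star ⇑u ⬝ᵥ r + star ⇑v ⬝ᵥ s).re = 0) ↔
      r = 0 ∧ s = 0 := by
  refine ⟨fun h => ⟨?_, ?_⟩, fun ⟨hr, hs⟩ _ _ => by simp [hr, hs]⟩
  · have hr := h (WithLp.toLp 2 r) 0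
    rw [WithLp.ofLp_zero, star_zero, zero_dotProduct, add_zero,
      ← EuclideanSpace.norm_sq_eq_re_star_dotProduct] at hr
    simpa using hr
  · have hs := h 0 (WithLp.toLp 2 s)
    rw [WithLp.ofLp_zero, star_zero, zero_dotProduct, zero_add,
      ← EuclideanSpace.norm_sq_eq_re_star_dotProduct] at hs
    simpa using hs

def contractSnd (ρ : Matrix (ι × κ) (ι × κ) ℂ) (y : κ → ℂ) : Matrix ι ι ℂ :=
  of fun i j => ∑ k, ∑ l, conj (y k) * ρ (i, k) (j, l) * y l

def contractFst (ρ : Matrix (ι × κ) (ι × κ) ℂ) (x : ι → ℂ) : Matrix κ κ ℂ :=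
  of fun k l => ∑ i, ∑ j, conj (x i) * ρ (i, k) (j, l) * x j

lemma star_dotProduct_contractSnd_mulVec (ρ : Matrix (ι × κ) (ι × κ) ℂ) (u x : ι → ℂ)
    (y : κ → ℂ) :
    star u ⬝ᵥ contractSnd ρ y *ᵥ x = star (prodVec u y) ⬝ᵥ ρ *ᵥ prodVec x y := by
  simp only [contractSnd, prodVec, dotProduct, mulVec, of_apply, Fintype.sum_prod_type,
    Finset.mul_sum, Finset.sum_mul, Pi.star_apply, star_mul', Complex.star_def]
  simp_rw [Finset.sum_comm (s := (Finset.univ : Finset κ)) (t := (Finset.univ : Finset ι))]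
  refine Finset.sum_congr rfl fun i _ => Finset.sum_congr rfl fun j _ =>
    Finset.sum_congr rfl fun k _ => Finset.sum_congr rfl fun l _ => by ring

lemma star_dotProduct_contractFst_mulVec (ρ : Matrix (ι × κ) (ι × κ) ℂ) (x : ι → ℂ)
    (v y : κ → ℂ) :
    star v ⬝ᵥ contractFst ρ x *ᵥ y = star (prodVec x v) ⬝ᵥ ρ *ᵥ prodVec x y := by
  simp only [contractFst, prodVec, dotProduct, mulVec, of_apply, Fintype.sum_prod_type,
    Finset.mul_sum, Finset.sum_mul, Pi.star_apply, star_mul', Complex.star_def]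
  simp_rw [Finset.sum_comm (s := (Finset.univ : Finset κ)) (t := (Finset.univ : Finset ι))]
  refine Finset.sum_congr rfl fun i _ => Finset.sum_congr rfl fun j _ =>
    Finset.sum_congr rfl fun k _ => Finset.sum_congr rfl fun l _ => by ring

noncomputable def productRayleigh (ρ : Matrix (ι × κ) (ι × κ) ℂ)
    (z : EuclideanSpace ℂ ι × EuclideanSpace ℂ κ) : ℝ :=
  (star (prodVec z.1 z.2) ⬝ᵥ ρ *ᵥ prodVec z.1 z.2).re / (‖z.1‖ ^ 2 * ‖z.2‖ ^ 2)

lemma differentiableAt_productRayleigh (ρ : Matrix (ι × κ) (ι × κ) ℂ)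
    {z : EuclideanSpace ℂ ι × EuclideanSpace ℂ κ} (h₁ : z.1 ≠ 0) (h₂ : z.2 ≠ 0) :
    DifferentiableAt ℝ (productRayleigh ρ) z := by
  have hden : DifferentiableAt ℝ (fun z : EuclideanSpace ℂ ι × EuclideanSpace ℂ κ =>
      ‖z.1‖ ^ 2 * ‖z.2‖ ^ 2) z :=
    (differentiableAt_fst.norm_sq ℂ).mul (differentiableAt_snd.norm_sq ℂ)
  unfold productRayleigh prodVec
  simp only [dotProduct, mulVec]
  fun_prop (disch := positivity)

lemma hasLineDerivAt_productRayleigh {ρ : Matrix (ι × κ) (ι × κ) ℂ} (hρ : ρ.IsHermitian)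
    {a : EuclideanSpace ℂ ι} {b : EuclideanSpace ℂ κ} (ha : ‖a‖ = 1) (hb : ‖b‖ = 1)
    {g : ℂ} (hg : g = star (prodVec a b) ⬝ᵥ ρ *ᵥ prodVec a b)
    (u : EuclideanSpace ℂ ι) (v : EuclideanSpace ℂ κ) :
    HasLineDerivAt ℝ (productRayleigh ρ)
      (2 * (star ⇑u ⬝ᵥ (contractSnd ρ b *ᵥ a - g • a)
        + star ⇑v ⬝ᵥ (contractFst ρ a *ᵥ b - g • b)).re) (a, b) (u, v) := by
  classical
  have hu := EuclideanSpace.hasDerivAt_ofLp_add_smul a u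
  have hv := EuclideanSpace.hasDerivAt_ofLp_add_smul b v
  have hnum := hρ.hasDerivAt_re_star_dotProduct_mulVec (hu.prodVec hv)
  -- `‖x‖ ^ 2` is the Hermitian form of the identity matrix
  have hden := (isHermitian_one.hasDerivAt_re_star_dotProduct_mulVec hu).fun_mul
    (isHermitian_one.hasDerivAt_re_star_dotProduct_mulVec hv)
  simp only [zero_smul, add_zero, one_mulVec, ← EuclideanSpace.norm_sq_eq_re_star_dotProduct,
    ha, hb] at hnum hden
  refine (hnum.div hden (by simp [ha, hb])).congr_deriv ?_
  have hg_im : g.im = 0 := hg ▸ hρ.im_star_dotProduct_mulVec_self _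
  simp only [zero_smul, add_zero, ha, hb, star_add, add_dotProduct, ← hg,
    ← star_dotProduct_contractSnd_mulVec, ← star_dotProduct_contractFst_mulVec]
  simp only [dotProduct_sub, dotProduct_smul, smul_eq_mul, Complex.add_re, Complex.sub_re,
    Complex.mul_re, hg_im]
  ring

lemma fderiv_productRayleigh_apply {ρ : Matrix (ι × κ) (ι × κ) ℂ} (hρ : ρ.IsHermitian)
    {a : EuclideanSpace ℂ ι} {b : EuclideanSpace ℂ κ} (ha : ‖a‖ = 1) (hb : ‖b‖ = 1)
    {g : ℂ} (hg : g = star (prodVec a b) ⬝ᵥ ρ *ᵥ prodVec a b)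
    (u : EuclideanSpace ℂ ι) (v : EuclideanSpace ℂ κ) :
    fderiv ℝ (productRayleigh ρ) (a, b) (u, v) =
      2 * (star ⇑u ⬝ᵥ (contractSnd ρ b *ᵥ a - g • a)
        + star ⇑v ⬝ᵥ (contractFst ρ a *ᵥ b - g • b)).re := by
  have hdiff := differentiableAt_productRayleigh ρ (z := (a, b))
    (norm_ne_zero_iff.1 (by simp [ha])) (norm_ne_zero_iff.1 (by simp [hb]))
  rw [← hdiff.lineDeriv_eq_fderiv, (hasLineDerivAt_productRayleigh hρ ha hb hg u v).lineDeriv]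

end

/-- The stationary points of the Rayleigh quotient of a Hermitian bipartite
matrix `ρ` restricted to product vectors `a ⊗ b` are characterized by the
*separability eigenvalue equations* `ρ_b a = g a` and `ρ_a b = g b`. -/
theorem separability_eigenvalue_equations
    {m n : ℕ}
    (ρ : Matrix (Fin m × Fin n) (Fin m × Fin n) ℂ) (hρ : ρ.IsHermitian)
    (a : EuclideanSpace ℂ (Fin m)) (b : EuclideanSpace ℂ (Fin n))
    (ha : ‖a‖ = 1) (hb : ‖b‖ = 1)
    (T : EuclideanSpace ℂ (Fin m) → EuclideanSpace ℂ (Fin n) →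
        (Fin m × Fin n → ℂ))
    (hT : ∀ x y p, T x y p = x p.1 * y p.2)
    (ρb : Matrix (Fin m) (Fin m) ℂ)
    (hρb : ∀ i j, ρb i j = ∑ k, ∑ l, conj (b k) * ρ (i, k) (j, l) * b l)
    (ρa : Matrix (Fin n) (Fin n) ℂ)
    (hρa : ∀ k l, ρa k l = ∑ i, ∑ j, conj (a i) * ρ (i, k) (j, l) * a j)
    (g : ℂ) (hg : g = ∑ p, ∑ q, conj (T a b p) * ρ p q * T a b q)
    (F : EuclideanSpace ℂ (Fin m) × EuclideanSpace ℂ (Fin n) → ℝ)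
    (hF : ∀ x y, F (x, y) =
      (∑ p, ∑ q, conj (T x y p) * ρ p q * T x y q).re / (‖x‖ ^ 2 * ‖y‖ ^ 2)) :
    fderiv ℝ F (a, b) = 0 ↔
      (ρb.mulVec a = g • a ∧ ρa.mulVec b = g • b) := by
  have hT' (x y) : T x y = prodVec x y := funext (hT x y)
  have hF' : F = productRayleigh ρ := funext fun ⟨x, y⟩ => by
    rw [hF, hT', sum_sum_conj_mul_mul_eq_star_dotProduct_mulVec, productRayleigh]
  have hg' : g = star (prodVec a b) ⬝ᵥ ρ *ᵥ prodVec a b := by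
    rw [hg, hT', sum_sum_conj_mul_mul_eq_star_dotProduct_mulVec]
  obtain rfl : ρb = contractSnd ρ b := Matrix.ext hρb
  obtain rfl : ρa = contractFst ρ a := Matrix.ext hρa
  subst hF'
  simp only [ContinuousLinearMap.ext_iff, Prod.forall, fderiv_productRayleigh_apply hρ ha hb hg',
    _root_.zero_apply, mul_eq_zero, two_ne_zero, false_or,
    forall_re_star_dotProduct_add_eq_zero_iff, sub_eq_zero]
end

section
/- Let ρ be a 2×2 complex positive semidefinite matrix with trace 1. Define the set of classical pure states C = {e₀e₀†, e₁e₁†} ∪ {v_φ v_φ† : φ ∈ ℝ}, where e₀, e₁ is the standard basis of ℂ² and v_φ = (e₀ + e^{iφ}e₁)/√2. Then ρ belongs to the convex hull (over ℝ) of C if and only if |ρ_{01}| ≤ min(ρ_{00}, ρ_{11}), i.e., the modulus of the off-diagonal entry is at most the smaller diagonal entry. -/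
open scoped ComplexConjugate ComplexOrder

/-!
The region `‖ρ₀₁‖ ≤ min ρ₀₀ ρ₁₁` is convex (a norm bounded by linear functionals) and contains
every classical state, hence their convex hull. Conversely, writing `ρ₁₀ = r e^{iφ}` with
`r = ‖ρ₁₀‖`, a Hermitian `ρ` decomposes as
`ρ = (ρ₀₀ - r) |0⟩⟨0| + (ρ₁₁ - r) |1⟩⟨1| + 2r |v_φ⟩⟨v_φ|`,
whose weights sum to `tr ρ = 1` and are nonnegative exactly when `r ≤ min ρ₀₀ ρ₁₁`.
-/

open Complex Matrix Set

theorem ConvexOn.convex_setOf_le_of_concaveOn {𝕜 E β : Type*} [Semiring 𝕜] [PartialOrder 𝕜]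
    [AddCommMonoid E] [AddCommGroup β] [PartialOrder β] [IsOrderedAddMonoid β] [SMul 𝕜 E]
    [Module 𝕜 β] [PosSMulMono 𝕜 β] {s : Set E} {f g : E → β}
    (hf : ConvexOn 𝕜 s f) (hg : ConcaveOn 𝕜 s g) :
    Convex 𝕜 {x ∈ s | f x ≤ g x} := by
  simpa [sub_nonpos] using (hf.sub hg).convex_le 0

theorem Convex.add_add_smul_mem {𝕜 E : Type*} [Field 𝕜] [LinearOrder 𝕜] [IsStrictOrderedRing 𝕜]
    [AddCommGroup E] [Module 𝕜 E] {s : Set E}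
    (hs : Convex 𝕜 s) {x y z : E} (hx : x ∈ s) (hy : y ∈ s) (hz : z ∈ s) {a b c : 𝕜}
    (ha : 0 ≤ a) (hb : 0 ≤ b) (hc : 0 ≤ c) (habc : a + b + c = 1) :
    a • x + b • y + c • z ∈ s := by
  simpa [Fin.sum_univ_three, add_assoc] using
    hs.sum_mem (t := Finset.univ) (w := ![a, b, c]) (z := ![x, y, z])
      (by simp [Fin.forall_fin_succ, ha, hb, hc]) (by simp [Fin.sum_univ_three, habc])
      (by simp [Fin.forall_fin_succ, hx, hy, hz])

namespace Qubit

def classicalRegion : Set (Matrix (Fin 2) (Fin 2) ℂ) :=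
  {M | ‖M 0 1‖ ≤ min (M 0 0).re (M 1 1).re}

theorem convex_setOf_norm_apply_le_re_apply {m n : Type*} (i : m) (j : n) (k : m) (l : n) :
    Convex ℝ {M : Matrix m n ℂ | ‖M i j‖ ≤ (M k l).re} := by
  simpa using ((convexOn_norm convex_univ).comp_linearMap
    (entryLinearMap ℝ ℂ i j)).convex_setOf_le_of_concaveOn
    ((reLm.comp (entryLinearMap ℝ ℂ k l)).concaveOn convex_univ)

theorem convex_classicalRegion : Convex ℝ classicalRegion := by
  simpa only [classicalRegion, le_min_iff, ofPred_and] using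
    (convex_setOf_norm_apply_le_re_apply 0 1 0 0).inter
      (convex_setOf_norm_apply_le_re_apply 0 1 1 1)

noncomputable def balancedKet (φ : ℝ) : Fin 2 → ℂ :=
  fun k => (![1, 0] k + exp (φ * I) * ![0, 1] k) / Real.sqrt 2

theorem vecMulVec_ket0 :
    vecMulVec ![1, 0] (star ![1, 0]) = (!![1, 0; 0, 0] : Matrix (Fin 2) (Fin 2) ℂ) := by
  ext i j
  fin_cases i <;> fin_cases j <;> simp [vecMulVec_apply]

theorem vecMulVec_ket1 :
    vecMulVec ![0, 1] (star ![0, 1]) = (!![0, 0; 0, 1] : Matrix (Fin 2) (Fin 2) ℂ) := by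
  ext i j
  fin_cases i <;> fin_cases j <;> simp [vecMulVec_apply]

theorem vecMulVec_balancedKet (φ : ℝ) :
    vecMulVec (balancedKet φ) (star (balancedKet φ)) =
      !![1 / 2, conj (exp (φ * I)) / 2; exp (φ * I) / 2, 1 / 2] := by
  have hsqrt : (Real.sqrt 2 : ℂ) ^ 2 = 2 := by
    norm_cast
    simp
  ext i j
  fin_cases i <;> fin_cases j <;> simp [balancedKet, vecMulVec_apply] <;> field_simp <;>
    simp [hsqrt, mul_conj, normSq_eq_norm_sq]

theorem vecMulVec_balancedKet_mem_classicalRegion (φ : ℝ) :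
    vecMulVec (balancedKet φ) (star (balancedKet φ)) ∈ classicalRegion := by
  simp [classicalRegion, vecMulVec_balancedKet, norm_exp_ofReal_mul_I]

theorem eq_combination_of_isHermitian {M : Matrix (Fin 2) (Fin 2) ℂ} (hM : M.IsHermitian)
    {r φ : ℝ} (hr : M 1 0 = r * exp (φ * I)) :
    M = ((M 0 0).re - r) • vecMulVec ![1, 0] (star ![1, 0]) +
      ((M 1 1).re - r) • vecMulVec ![0, 1] (star ![0, 1]) +
      (2 * r) • vecMulVec (balancedKet φ) (star (balancedKet φ)) := by
  have h00 : M 0 0 = (M 0 0).re := (hM.coe_re_apply_self 0).symm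
  have h11 : M 1 1 = (M 1 1).re := (hM.coe_re_apply_self 1).symm
  have h01 : M 0 1 = r * conj (exp (φ * I)) := by
    rw [← hM.apply 0 1, hr]
    simp
  rw [vecMulVec_ket0, vecMulVec_ket1, vecMulVec_balancedKet]
  ext i j
  fin_cases i <;> fin_cases j <;> simp
  · linear_combination h00
  · linear_combination h01
  · linear_combination hr
  · linear_combination h11

end Qubit

open Qubit

/-- A qubit density matrix is a convex mixture of the classical states
"false" `|0⟩⟨0|`, "true" `|1⟩⟨1|` and the "undecidable" balanced
superpositions `(|0⟩ + e^{iφ}|1⟩)/√2` if and only if the modulus of its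
off-diagonal entry is at most the smaller diagonal entry. -/
theorem ternary_logic_qubit_classical_iff
    (ρ : Matrix (Fin 2) (Fin 2) ℂ) (hpsd : ρ.PosSemidef) (htr : ρ.trace = 1)
    (e₀ e₁ : Fin 2 → ℂ) (he₀ : e₀ = ![1, 0]) (he₁ : e₁ = ![0, 1])
    (v : ℝ → Fin 2 → ℂ)
    (hv : ∀ φ : ℝ, v φ = fun k =>
      (e₀ k + Complex.exp (φ * Complex.I) * e₁ k) / Real.sqrt 2)
    (C : Set (Matrix (Fin 2) (Fin 2) ℂ))
    (hC : C = {M | M = Matrix.of fun i j => e₀ i * conj (e₀ j)} ∪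
              {M | M = Matrix.of fun i j => e₁ i * conj (e₁ j)} ∪
              {M | ∃ φ : ℝ, M = Matrix.of fun i j => v φ i * conj (v φ j)}) :
    ρ ∈ convexHull ℝ C ↔
      ‖ρ 0 1‖ ≤ min (ρ 0 0).re (ρ 1 1).re := by
  subst he₀ he₁ hC
  obtain rfl : v = balancedKet := funext hv
  constructor
  · refine fun hρ => convexHull_min ?_ convex_classicalRegion hρ
    rintro M ((rfl | rfl) | ⟨φ, rfl⟩)
    · simp [classicalRegion]
    · simp [classicalRegion]
    · exact vecMulVec_balancedKet_mem_classicalRegion φ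
  · intro hρ
    have hnorm : ‖ρ 0 1‖ = ‖ρ 1 0‖ := by
      rw [← hpsd.1.apply 0 1, norm_star]
    have hdiag : (ρ 0 0).re + (ρ 1 1).re = 1 := by
      simpa [trace_fin_two] using congrArg re htr
    rw [le_min_iff, hnorm] at hρ
    rw [eq_combination_of_isHermitian hpsd.1 (norm_mul_exp_arg_mul_I (ρ 1 0)).symm]
    -- `vecMulVec v (star v)` unfolds to the projector `of fun i j => v i * conj (v j)` used in `C`.
    refine (convex_convexHull ℝ _).add_add_smul_mem ?_ ?_ ?_ ?_ ?_ ?_ ?_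
    · exact subset_convexHull ℝ _ (Or.inl (Or.inl rfl))
    · exact subset_convexHull ℝ _ (Or.inl (Or.inr rfl))
    · exact subset_convexHull ℝ _ (Or.inr ⟨_, rfl⟩)
    all_goals linarith [norm_nonneg (ρ 1 0)]
end

section
/- Let S ∈ ℕ with S ≥ 2, and work in ℂ^{S+1} with standard basis e₀, …, e_S. Let ψ = (e₀ + e_S)/√2, and for each n ∈ {0, …, 2S−1} define the vector v_n ∈ ℂ^{S+1} with components (v_n)_k = 2^{−S/2} · √(binom(S,k)) · exp(−iπkn/S) for k = 0, …, S. Then the rank-one projector ψψ† admits the decomposition ψψ† = (1/2)·e₀e₀† + (1/2)·e_S e_S† + Σ_{n=0}^{2S−1} (−1)^n · (2^S/(4S)) · v_n v_n†. -/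
/-!
With `ζ = exp (iπ/S)`, a primitive `2S`-th root of unity, the `(i, j)` entry of `v_n v_n†` is
`2^{-S} √(C(S,i) C(S,j)) ζ^{n(j-i)}`, and the sign `(-1)^n = ζ^{nS}` turns the weighted sum over
`n < 2S` into `∑ₙ (ζ^{S-i+j})^n`. This vanishes unless `2S ∣ S - i + j`, which for `i, j ≤ S`
leaves only the corner entries `(0, S)` and `(S, 0)`, each equal to `2^S/(4S) · 2^{-S} · 2S = 1/2`:
these are exactly the coherences of `ψψ†`, whose diagonal part is `½ e₀e₀† + ½ e_S e_S†`.
-/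

open scoped ComplexConjugate

/-- The rank-one projector onto a vector. -/
def outer {d : ℕ} (v : Fin d → ℂ) : Matrix (Fin d) (Fin d) ℂ :=
  Matrix.of fun i j => v i * conj (v j)

open Finset

theorem IsPrimitiveRoot.geom_sum_pow_eq_ite {R : Type*} [CommRing R] [IsDomain R] {ζ : R} {N : ℕ}
    (h : IsPrimitiveRoot ζ N) (k : ℕ) :
    ∑ n ∈ range N, (ζ ^ k) ^ n = if N ∣ k then (N : R) else 0 := by
  split_ifs with hk
  · simp [(h.pow_eq_one_iff_dvd k).2 hk]
  · refine eq_zero_of_ne_zero_of_mul_left_eq_zero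
      (sub_ne_zero_of_ne (Ne.symm (mt (h.pow_eq_one_iff_dvd k).1 hk))) ?_
    rw [mul_neg_geom_sum, ← pow_mul, mul_comm, pow_mul, h.pow_eq_one, one_pow, sub_self]

theorem Complex.isPrimitiveRoot_exp_pi_mul_I_div {S : ℕ} (hS : S ≠ 0) :
    IsPrimitiveRoot (Complex.exp (Real.pi * Complex.I / S)) (2 * S) := by
  convert Complex.isPrimitiveRoot_exp (2 * S) (by omega) using 2
  push_cast
  field_simp

theorem two_mul_dvd_sub_add_iff {S i j : ℕ} (hi : i ≤ S) (hj : j ≤ S) :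
    2 * S ∣ S - i + j ↔ i = 0 ∧ j = S ∨ i = S ∧ j = 0 := by
  constructor
  · rintro ⟨c, hc⟩
    rcases c with _ | _ | c
    · omega
    · omega
    · have : 2 * S * 2 ≤ 2 * S * (c + 1 + 1) := Nat.mul_le_mul_left _ (by omega)
      omega
  · rintro (⟨rfl, rfl⟩ | ⟨rfl, rfl⟩)
    · exact ⟨1, by omega⟩
    · simp

theorem Complex.ofReal_sqrt_sq {x : ℝ} (hx : 0 ≤ x) : ((Real.sqrt x : ℝ) : ℂ) ^ 2 = x := by
  rw [← Complex.ofReal_pow, Real.sq_sqrt hx]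

noncomputable def equatorialCoherent (S n : ℕ) (k : Fin (S + 1)) : ℂ :=
  ((Real.sqrt (2 ^ S))⁻¹ * Real.sqrt (S.choose (k : ℕ)) : ℝ) *
    Complex.exp (-(Real.pi * (k : ℕ) * n / S : ℝ) * Complex.I)

theorem neg_one_pow_mul_exp_mul_conj_exp {S i : ℕ} (hS : S ≠ 0) (hi : i ≤ S) (j n : ℕ) :
    (-1) ^ n * (Complex.exp (-(Real.pi * i * n / S : ℝ) * Complex.I) *
      conj (Complex.exp (-(Real.pi * j * n / S : ℝ) * Complex.I))) =
      (Complex.exp (Real.pi * Complex.I / S) ^ (S - i + j)) ^ n := by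
  rw [← Complex.exp_pi_mul_I, ← Complex.exp_conj, ← Complex.exp_nat_mul, ← Complex.exp_nat_mul,
    ← Complex.exp_nat_mul, ← Complex.exp_add, ← Complex.exp_add]
  congr 1
  simp only [map_mul, map_neg, Complex.conj_ofReal, Complex.conj_I]
  push_cast [Nat.cast_sub hi]
  field_simp
  ring

theorem sum_neg_one_pow_smul_outer_equatorialCoherent {S : ℕ} (hS : S ≠ 0) :
    ∑ n ∈ range (2 * S), ((-1 : ℝ) ^ n * (2 ^ S / (4 * S) : ℝ)) • outer (equatorialCoherent S n) =
      Matrix.of fun i j : Fin (S + 1) =>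
        if (i : ℕ) = 0 ∧ (j : ℕ) = S ∨ (i : ℕ) = S ∧ (j : ℕ) = 0 then (1 / 2 : ℂ) else 0 := by
  ext i j
  have hi := Nat.le_of_lt_succ i.isLt
  have hj := Nat.le_of_lt_succ j.isLt
  set w : Fin (S + 1) → ℂ := fun k => ((Real.sqrt (2 ^ S))⁻¹ * Real.sqrt (S.choose (k : ℕ)) : ℝ)
  have hterm (n : ℕ) : ((-1 : ℝ) ^ n * (2 ^ S / (4 * S) : ℝ)) •
      (equatorialCoherent S n i * conj (equatorialCoherent S n j)) =
      (2 ^ S / (4 * S) * w i * w j) *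
        (Complex.exp (Real.pi * Complex.I / S) ^ (S - i + j)) ^ n := by
    rw [← neg_one_pow_mul_exp_mul_conj_exp hS hi]
    simp only [equatorialCoherent, w, map_mul, Complex.conj_ofReal, Complex.real_smul]
    push_cast
    ring
  simp only [Matrix.sum_apply, Matrix.smul_apply, outer, Matrix.of_apply, hterm, ← mul_sum,
    (Complex.isPrimitiveRoot_exp_pi_mul_I_div hS).geom_sum_pow_eq_ite,
    two_mul_dvd_sub_add_iff hi hj]
  split_ifs with h
  · have hw : w i * w j = (2 ^ S)⁻¹ := by
      have hsq : ((Real.sqrt (2 ^ S) : ℝ) : ℂ) ^ 2 = 2 ^ S := by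
        exact_mod_cast Complex.ofReal_sqrt_sq (by positivity)
      rcases h with ⟨hi', hj'⟩ | ⟨hi', hj'⟩ <;>
      · simp only [w, hi', hj', Nat.choose_zero_right, Nat.choose_self, Nat.cast_one, Real.sqrt_one,
          mul_one, Complex.ofReal_inv, ← sq, inv_pow, hsq]
    rw [mul_assoc _ (w i), hw]
    field_simp
    push_cast
    ring
  · simp

/-- Quasiprobability decomposition of the spin superposition state
`(|-s⟩ + |s⟩)/√2` over spin coherent states on the equator and poles of the
Poincaré sphere, with quasiprobabilities `1/2`, `1/2` and
`(-1)^n 2^S/(4S)`. Here `S = 2s ≥ 2`. -/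
theorem spin_superposition_quasiprob_decomposition
    (S : ℕ) (hS : 2 ≤ S)
    (e₀ eS : Fin (S + 1) → ℂ)
    (he₀ : e₀ = fun k => if k = 0 then 1 else 0)
    (heS : eS = fun k => if k = Fin.last S then 1 else 0)
    (ψ : Fin (S + 1) → ℂ)
    (hψ : ψ = fun k => (e₀ k + eS k) / Real.sqrt 2)
    (v : ℕ → Fin (S + 1) → ℂ)
    (hv : ∀ n, v n = fun (k : Fin (S + 1)) =>
      ((Real.sqrt (2 ^ S))⁻¹ * Real.sqrt (S.choose (k : ℕ)) : ℝ) *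
        Complex.exp (-(Real.pi * (k : ℕ) * n / S : ℝ) * Complex.I)) :
    outer ψ =
      (1 / 2 : ℝ) • outer e₀ + (1 / 2 : ℝ) • outer eS +
        ∑ n ∈ Finset.range (2 * S),
          ((-1 : ℝ) ^ n * (2 ^ S / (4 * S) : ℝ)) • outer (v n) := by
  obtain rfl : v = equatorialCoherent S := funext hv
  rw [sum_neg_one_pow_smul_outer_equatorialCoherent (by omega)]
  subst he₀ heS hψ
  have h2 : ((Real.sqrt 2 : ℝ) : ℂ) ^ 2 = 2 := by
    exact_mod_cast Complex.ofReal_sqrt_sq zero_le_two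
  ext i j
  simp only [outer, Matrix.add_apply, Matrix.smul_apply, Matrix.of_apply, Fin.ext_iff,
    Fin.val_zero, Fin.val_last, map_div₀, Complex.conj_ofReal]
  split_ifs <;> first | omega | (field_simp; norm_num [h2])
end

section
/- Let ρ be a d×d complex positive semidefinite matrix with trace 1 (a density matrix). Then ρ belongs to the convex hull (over ℝ) of the set {cc^T : c ∈ ℝ^d, ‖c‖ = 1} of projectors onto real unit vectors (viewed as complex matrices with real entries) if and only if all entries of ρ are real, i.e., ρ equals its entrywise complex conjugate. -/
open scoped ComplexOrder

/-!
If `ρ` has real entries it is the complexification of its real part `Re ρ`, which is again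
positive semidefinite of trace one. The spectral theorem writes `Re ρ` as a convex combination of
the projectors `u uᵀ` onto its real orthonormal eigenvectors, with the (nonnegative) eigenvalues
as weights. Conversely, the matrices with real entries form a real subspace containing every
`c cᵀ`, so the convex hull stays inside it.
-/

namespace Matrix

variable {𝕜 n : Type*} [RCLike 𝕜] [Fintype n]

theorem IsHermitian.eq_sum_eigenvalues_smul_vecMulVec [DecidableEq n] {A : Matrix n n 𝕜}
    (hA : A.IsHermitian) :
    A = ∑ k, hA.eigenvalues k •
      vecMulVec ⇑(hA.eigenvectorBasis k) (star ⇑(hA.eigenvectorBasis k)) := by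
  conv_lhs => rw [hA.spectral_theorem, Unitary.conjStarAlgAut_apply]
  ext i j
  simp only [mul_apply, eigenvectorUnitary_apply, diagonal_apply, Function.comp_apply, mul_ite,
    mul_zero, Finset.sum_ite_eq', Finset.mem_univ, ↓reduceIte, star_apply, RCLike.star_def,
    sum_apply, smul_apply, vecMulVec_apply, Pi.star_apply, RCLike.real_smul_eq_coe_mul]
  exact Finset.sum_congr rfl fun k _ => by ring

theorem PosSemidef.mem_convexHull_vecMulVec_star [DecidableEq n] {A : Matrix n n 𝕜}
    (hA : A.PosSemidef) (htr : A.trace = 1) :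
    A ∈ convexHull ℝ {vecMulVec c (star c) | (c : n → 𝕜) (_ : star c ⬝ᵥ c = 1)} := by
  have hsum : ∑ k, hA.1.eigenvalues k = 1 := by
    exact_mod_cast hA.1.trace_eq_sum_eigenvalues.symm.trans htr
  rw [hA.1.eq_sum_eigenvalues_smul_vecMulVec]
  refine (convex_convexHull ℝ _).sum_mem (fun k _ => hA.eigenvalues_nonneg k) hsum
    fun k _ => subset_convexHull ℝ _ ⟨_, ?_, rfl⟩
  rw [dotProduct_comm, ← EuclideanSpace.inner_eq_star_dotProduct,
    hA.1.eigenvectorBasis.inner_eq_one]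

theorem PosSemidef.map_re {A : Matrix n n 𝕜} (hA : A.PosSemidef) :
    (A.map RCLike.re).PosSemidef := by
  refine .of_dotProduct_mulVec_nonneg ?_ fun x => ?_
  · ext i j
    simp [← hA.1.apply i j]
  · have hquad : star x ⬝ᵥ (A.map RCLike.re *ᵥ x) =
        RCLike.re (star (fun i => (x i : 𝕜)) ⬝ᵥ (A *ᵥ fun i => (x i : 𝕜))) := by
      simp [dotProduct, mulVec, Finset.mul_sum, mul_comm, mul_left_comm]
    rw [hquad]
    exact (RCLike.nonneg_iff.mp (hA.dotProduct_mulVec_nonneg _)).1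

theorem trace_map_re (A : Matrix n n 𝕜) : (A.map RCLike.re).trace = RCLike.re A.trace :=
  (AddMonoidHom.map_trace RCLike.re A).symm

end Matrix

/-- A density matrix is a statistical mixture of pure states with real
probability amplitudes (projectors onto real unit vectors) if and only if all
its entries are real. -/
theorem redit_classical_iff_real_entries
    {d : ℕ} (ρ : Matrix (Fin d) (Fin d) ℂ)
    (hpsd : ρ.PosSemidef) (htr : ρ.trace = 1) :
    ρ ∈ convexHull ℝ {M : Matrix (Fin d) (Fin d) ℂ |
        ∃ c : Fin d → ℝ, (∑ i, c i ^ 2 = 1) ∧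
          M = Matrix.of fun i j => ((c i * c j : ℝ) : ℂ)} ↔
      ∀ i j, ρ i j = starRingEnd ℂ (ρ i j) := by
  let f := (Complex.ofRealAm.mapMatrix : Matrix (Fin d) (Fin d) ℝ →ₐ[ℝ] _).toLinearMap
  have hgen : {M : Matrix (Fin d) (Fin d) ℂ |
        ∃ c : Fin d → ℝ, (∑ i, c i ^ 2 = 1) ∧
          M = Matrix.of fun i j => ((c i * c j : ℝ) : ℂ)} =
      f '' {Matrix.vecMulVec c (star c) | (c : Fin d → ℝ) (_ : star c ⬝ᵥ c = 1)} := by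
    ext M
    simp [f, dotProduct, sq, eq_comm (a := M), Matrix.vecMulVec, Matrix.map]
  rw [hgen, ← f.image_convexHull]
  constructor
  · rintro ⟨B, -, rfl⟩ i j
    simp [f]
  · intro hreal
    refine ⟨ρ.map RCLike.re, hpsd.map_re.mem_convexHull_vecMulVec_star ?_, ?_⟩
    · simp [Matrix.trace_map_re, htr]
    · ext i j
      simpa [f] using (Complex.conj_eq_iff_re.mp (hreal i j).symm)
end

section
/- Every Hermitian matrix H indexed by (Fin m × Fin n) over ℂ lies in the real linear span of the set of Kronecker products of rank-one projectors, {(aa†)⊗(bb†) : a ∈ ℂ^m, b ∈ ℂ^n, ‖a‖ = ‖b‖ = 1}. Consequently, every bipartite density matrix can be written as a real (possibly signed) linear combination of pure product states, i.e., the residual component vanishes for the classical family of product states. -/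
/-!
Over `ℂ`, the Kronecker products `A ⊗ₖ B` of rank-one projectors span all matrices: by
polarization, `4 • x y† = ∑_{c ∈ {±1, ±i}} c • (x + c y)(x + c y)†`, so rank-one projectors span
every matrix unit `Eᵢⱼ = eᵢ eⱼ†`, and `E_{(i,k),(j,l)} = Eᵢⱼ ⊗ₖ Eₖₗ`. All these products are
Hermitian, so taking real parts `(X + X†) / 2` of a complex combination representing a Hermitian
matrix gives a real combination.
-/

open scoped ComplexConjugate Kronecker

open Matrix Submodule

theorem mem_span_real_of_mem_span_complex {E : Type*} [AddCommGroup E] [Module ℂ E]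
    [Module ℝ E] [IsScalarTower ℝ ℂ E] [StarAddMonoid E] [StarModule ℂ E]
    {s : Set E} (hs : ∀ g ∈ s, IsSelfAdjoint g) {x : E}
    (hx : x ∈ span ℂ s) (hx' : IsSelfAdjoint x) : x ∈ span ℝ s := by
  suffices h : ∀ c : ℂ, c • x + star (c • x) ∈ span ℝ s by
    have h1 := smul_mem (span ℝ s) (2⁻¹ : ℝ) (h 1)
    rwa [one_smul, hx'.star_eq, ← two_smul ℝ, smul_smul, inv_mul_cancel₀ two_ne_zero,
      one_smul] at h1
  clear hx'
  induction hx using span_induction with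
  | mem g hg =>
    intro c
    rw [star_smul, (hs g hg).star_eq, ← add_smul, Complex.star_def, Complex.add_conj,
      ← Complex.coe_algebraMap, algebraMap_smul]
    exact smul_mem _ _ (subset_span hg)
  | zero => simp
  | add y z _ _ hy hz =>
    intro c
    rw [smul_add, star_add, add_add_add_comm]
    exact add_mem (hy c) (hz c)
  | smul d y _ hy =>
    intro c
    rw [smul_smul]
    exact hy (c * d)

theorem IsSelfAdjoint.kronecker {R l n : Type*} [CommSemiring R] [StarRing R]
    {A : Matrix l l R} {B : Matrix n n R} (hA : IsSelfAdjoint A) (hB : IsSelfAdjoint B) :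
    IsSelfAdjoint (A ⊗ₖ B) := by
  rw [IsSelfAdjoint, star_eq_conjTranspose, conjTranspose_kronecker, ← star_eq_conjTranspose,
    ← star_eq_conjTranspose, hA.star_eq, hB.star_eq]

theorem span_image2_kronecker_eq_top {R l m n p : Type*} [CommSemiring R]
    [Fintype l] [Fintype m] [Fintype n] [Fintype p]
    [DecidableEq l] [DecidableEq m] [DecidableEq n] [DecidableEq p]
    {s : Set (Matrix l m R)} {t : Set (Matrix n p R)}
    (hs : span R s = ⊤) (ht : span R t = ⊤) :
    span R (Set.image2 (· ⊗ₖ ·) s t) = ⊤ := by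
  have hmap := map₂_span_span R (kroneckerBilinear (R := R) (α := R)) s t
  rw [hs, ht] at hmap
  change _ = span R (Set.image2 (· ⊗ₖ ·) s t) at hmap
  rw [← hmap, eq_top_iff']
  intro X
  rw [matrix_eq_sum_single X]
  refine sum_mem fun ik _ => sum_mem fun jl _ => ?_
  rw [← mul_one (X ik jl), ← single_kronecker_single]
  exact apply_mem_map₂ _ mem_top mem_top

theorem vecMulVec_star_mem_span_vecMulVec_self_star {ι : Type*} (x y : ι → ℂ) :
    vecMulVec x (star y) ∈ span ℂ (Set.range fun a : ι → ℂ => vecMulVec a (star a)) := by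
  let P (a : ι → ℂ) : Matrix ι ι ℂ := vecMulVec a (star a)
  have polarization : vecMulVec x (star y) = (4 : ℂ)⁻¹ • (P (x + y) - P (x - y)
      + Complex.I • P (x + Complex.I • y) - Complex.I • P (x - Complex.I • y)) := by
    ext i j
    simp only [P, vecMulVec_apply, Matrix.smul_apply, Matrix.sub_apply, Matrix.add_apply,
      Pi.add_apply, Pi.sub_apply, Pi.smul_apply, Pi.star_apply, star_add, star_sub, star_smul,
      smul_eq_mul, Complex.star_def, Complex.conj_I]
    linear_combination (x i * conj (y j) - y i * conj (x j)) / 2 * Complex.I_sq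
  have hP (a : ι → ℂ) : P a ∈ span ℂ (Set.range P) := subset_span ⟨a, rfl⟩
  rw [polarization]
  exact smul_mem _ _ (sub_mem (add_mem (sub_mem (hP _) (hP _)) (smul_mem _ _ (hP _)))
    (smul_mem _ _ (hP _)))

section UnitRankOneProjectors

variable {ι : Type*} [Fintype ι]

def unitRankOneProjectors (ι : Type*) [Fintype ι] : Set (Matrix ι ι ℂ) :=
  {M | ∃ a : ι → ℂ, ∑ i, ‖a i‖ ^ 2 = 1 ∧ M = vecMulVec a (star a)}

theorem isSelfAdjoint_of_mem_unitRankOneProjectors {M : Matrix ι ι ℂ}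
    (hM : M ∈ unitRankOneProjectors ι) : IsSelfAdjoint M := by
  obtain ⟨a, -, rfl⟩ := hM
  rw [IsSelfAdjoint, star_eq_conjTranspose, conjTranspose_vecMulVec, star_star]

theorem vecMulVec_self_star_mem_span_unitRankOneProjectors (a : ι → ℂ) :
    vecMulVec a (star a) ∈ span ℝ (unitRankOneProjectors ι) := by
  set r : ℝ := ∑ i, ‖a i‖ ^ 2 with hr_def
  rcases (show 0 ≤ r by positivity).eq_or_lt with hr | hr
  · have ha : a = 0 := by
      ext i
      simpa using (Finset.sum_eq_zero_iff_of_nonneg (fun i _ => by positivity)).1 hr.symm i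
    simp [ha]
  · have hsqrt : (√r : ℂ) * √r = r := by exact_mod_cast Real.mul_self_sqrt hr.le
    have hsqrt_ne : (√r : ℂ) ≠ 0 := by exact_mod_cast (Real.sqrt_pos.2 hr).ne'
    set u : ι → ℂ := ((√r)⁻¹ : ℂ) • a
    have hau : vecMulVec a (star a) = r • vecMulVec u (star u) := by
      ext i j
      simp only [u, vecMulVec_apply, Pi.star_apply, Pi.smul_apply, star_smul, smul_eq_mul,
        Matrix.smul_apply, Complex.real_smul, ← hsqrt, star_inv₀, Complex.star_def,
        Complex.conj_ofReal]
      field_simp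
    rw [hau]
    refine smul_mem _ _ (subset_span ⟨u, ?_, rfl⟩)
    simp only [u, Pi.smul_apply, smul_eq_mul, norm_mul, mul_pow, ← Finset.mul_sum, ← hr_def,
      norm_inv, Complex.norm_real, Real.norm_eq_abs, abs_of_nonneg (Real.sqrt_nonneg r), inv_pow,
      Real.sq_sqrt hr.le, inv_mul_cancel₀ hr.ne']

theorem span_complex_unitRankOneProjectors_eq_top [DecidableEq ι] :
    span ℂ (unitRankOneProjectors ι) = ⊤ := by
  have hrange : span ℂ (Set.range fun a : ι → ℂ => vecMulVec a (star a)) ≤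
      span ℂ (unitRankOneProjectors ι) := by
    rw [span_le]
    rintro _ ⟨a, rfl⟩
    exact span_le_restrictScalars ℝ ℂ _ (vecMulVec_self_star_mem_span_unitRankOneProjectors a)
  rw [eq_top_iff']
  intro X
  rw [matrix_eq_sum_single X]
  refine sum_mem fun i _ => sum_mem fun j _ => hrange ?_
  have hstar : (Pi.single j 1 : ι → ℂ) = star (Pi.single j 1) := by simp
  rw [← mul_one (X i j), ← smul_eq_mul, ← smul_single, single_eq_single_vecMulVec_single, hstar]
  exact smul_mem _ _ (vecMulVec_star_mem_span_vecMulVec_self_star _ _)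

end UnitRankOneProjectors

/-- Every Hermitian matrix on a bipartite system lies in the real linear span
of the Kronecker products of rank-one projectors onto unit vectors; hence the
residual component vanishes for the classical family of product states. -/
theorem hermitian_mem_span_productProjectors
    {m n : ℕ} (H : Matrix (Fin m × Fin n) (Fin m × Fin n) ℂ)
    (hH : H.IsHermitian) :
    H ∈ Submodule.span ℝ {M : Matrix (Fin m × Fin n) (Fin m × Fin n) ℂ |
      ∃ (a : Fin m → ℂ) (b : Fin n → ℂ),
        (∑ i, ‖a i‖ ^ 2 = 1) ∧
        (∑ k, ‖b k‖ ^ 2 = 1) ∧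
        M = (Matrix.of fun i j => a i * conj (a j)) ⊗ₖ
            (Matrix.of fun k l => b k * conj (b l))} := by
  suffices h : H ∈ span ℝ
      (Set.image2 (· ⊗ₖ ·) (unitRankOneProjectors (Fin m)) (unitRankOneProjectors (Fin n))) by
    refine span_mono ?_ h
    rintro _ ⟨_, ⟨a, ha, rfl⟩, _, ⟨b, hb, rfl⟩, rfl⟩
    exact ⟨a, b, ha, hb, rfl⟩
  refine mem_span_real_of_mem_span_complex ?_ ?_ hH
  · rintro _ ⟨A, hA, B, hB, rfl⟩
    exact (isSelfAdjoint_of_mem_unitRankOneProjectors hA).kronecker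
      (isSelfAdjoint_of_mem_unitRankOneProjectors hB)
  · rw [span_image2_kronecker_eq_top span_complex_unitRankOneProjectors_eq_top
      span_complex_unitRankOneProjectors_eq_top]
    exact mem_top
end

section
/- Let N ≥ 2 and let σ₀ = I₂, σz = [[1,0],[0,−1]], σx = [[0,1],[1,0]], σy = [[0,−i],[i,0]]. For real numbers a, b, c define the generalized Smolin state ρ = 2^{−N}·(σ₀^{⊗N} + a·σz^{⊗N} + b·σx^{⊗N} + c·σy^{⊗N}), where M^{⊗N} denotes the N-fold Kronecker power, a matrix indexed by functions f, g : Fin N → Fin 2. Then ρ belongs to the convex hull (over ℝ) of the set of N-qubit pure product states {⊗_{j=1}^N v_j v_j† : v_j ∈ ℂ², ‖v_j‖ = 1} if and only if |a| + |b| + |c| ≤ 1. -/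
/-!
A pure product state `⊗ⱼ vⱼvⱼ†` has Pauli correlations `tr(P σ^{⊗N}) = ∏ⱼ ⟨vⱼ, σ vⱼ⟩`, and each
qubit's Bloch vector `(⟨σz⟩, ⟨σx⟩, ⟨σy⟩)` is a unit vector. For `N ≥ 2`, bounding all but two
factors of each product by `1` and applying AM-GM to the remaining two gives
`|⟨σz^{⊗N}⟩| + |⟨σx^{⊗N}⟩| + |⟨σy^{⊗N}⟩| ≤ 1`; this constraint is convex, so it passes to
mixtures, and for `ρ` the three correlations are `a`, `b`, `c`.

Conversely, writing `σ = P₊ - P₋` and `1 = P₊ + P₋` with rank-one projectors, expanding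
`2^{-N}(1^{⊗N} + ε σ^{⊗N})` gives a mixture of products of the `P_±` with weights
`2^{-N}(1 ± ε) ≥ 0` for `|ε| ≤ 1`; `ρ` is a convex combination of such states with
`ε = sign a, sign b, sign c` and of `2^{-N} 1^{⊗N}`.
-/

open scoped ComplexConjugate

/-- The `N`-fold Kronecker power of a `2×2` matrix, indexed by functions
`Fin N → Fin 2`. -/
def kronPow {N : ℕ} (M : Matrix (Fin 2) (Fin 2) ℂ) :
    Matrix (Fin N → Fin 2) (Fin N → Fin 2) ℂ :=
  Matrix.of fun f g => ∏ j, M (f j) (g j)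

open Matrix

namespace GeneralizedSmolin

noncomputable section

section PiKron

variable {ι n R : Type*} [Fintype ι] [CommSemiring R]

def piKron (A : ι → Matrix n n R) : Matrix (ι → n) (ι → n) R :=
  of fun f g => ∏ j, A j (f j) (g j)

lemma kronPow_eq_piKron {N : ℕ} (M : Matrix (Fin 2) (Fin 2) ℂ) :
    kronPow (N := N) M = piKron fun _ => M := rfl

lemma piKron_mul_piKron [DecidableEq ι] [Fintype n] (A B : ι → Matrix n n R) :
    piKron A * piKron B = piKron (A * B) := by
  ext f g
  simp only [piKron, mul_apply, of_apply, Pi.mul_apply, Fintype.prod_sum,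
    Finset.prod_mul_distrib]

lemma trace_piKron [DecidableEq ι] [Fintype n] (A : ι → Matrix n n R) :
    (piKron A).trace = ∏ j, (A j).trace := by
  simp only [trace, Matrix.diag, piKron, of_apply, Fintype.prod_sum]

lemma piKron_sum [DecidableEq ι] {κ : Type*} [Fintype κ] (B : ι → κ → Matrix n n R) :
    piKron (fun j => ∑ s, B j s) = ∑ f : ι → κ, piKron fun j => B j (f j) := by
  ext f g
  simp only [piKron, of_apply, Matrix.sum_apply, Fintype.prod_sum]

lemma piKron_smul {S : Type*} [CommSemiring S] [Algebra S R] (c : ι → S)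
    (A : ι → Matrix n n R) : piKron (fun j => c j • A j) = (∏ j, c j) • piKron A := by
  ext f g
  simp only [piKron, of_apply, Matrix.smul_apply, Algebra.smul_def, Finset.prod_mul_distrib,
    map_prod]

end PiKron

def productStates (ι n : Type*) [Fintype ι] [Fintype n] : Set (Matrix (ι → n) (ι → n) ℂ) :=
  {M | ∃ v : ι → n → ℂ, (∀ j, ∑ i, ‖v j i‖ ^ 2 = 1) ∧
    M = piKron fun j => vecMulVec (v j) (star (v j))}

def pauliZ : Matrix (Fin 2) (Fin 2) ℂ := !![1, 0; 0, -1]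

def pauliX : Matrix (Fin 2) (Fin 2) ℂ := !![0, 1; 1, 0]

def pauliY : Matrix (Fin 2) (Fin 2) ℂ := !![0, -Complex.I; Complex.I, 0]

def smolinState (N : ℕ) (a b c : ℝ) : Matrix (Fin N → Fin 2) (Fin N → Fin 2) ℂ :=
  ((2 : ℂ) ^ N)⁻¹ •
    (kronPow 1 + (a : ℂ) • kronPow pauliZ + (b : ℂ) • kronPow pauliX + (c : ℂ) • kronPow pauliY)

section Necessity

lemma norm_sq_trace_vecMulVec_mul_pauli (v : Fin 2 → ℂ) :
    ‖(vecMulVec v (star v) * pauliZ).trace‖ ^ 2 + ‖(vecMulVec v (star v) * pauliX).trace‖ ^ 2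
      + ‖(vecMulVec v (star v) * pauliY).trace‖ ^ 2 = (∑ i, ‖v i‖ ^ 2) ^ 2 := by
  simp only [Complex.sq_norm, Complex.normSq_apply, trace_fin_two, mul_apply, Fin.sum_univ_two,
    vecMulVec_apply, pauliZ, pauliX, pauliY, Pi.star_apply, RCLike.star_def, of_apply, cons_val',
    cons_val_zero, cons_val_fin_one, cons_val_one, mul_one, mul_zero, add_zero, zero_add, mul_neg,
    zero_sub, sub_neg_eq_add, neg_add_rev, neg_neg, Complex.add_re, Complex.add_im, Complex.mul_re,
    Complex.mul_im, Complex.neg_re, Complex.neg_im, Complex.conj_re, Complex.conj_im,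
    Complex.I_re, Complex.I_im]
  ring

lemma abs_prod_le_abs_mul_abs {ι : Type*} [Fintype ι] {T : ι → ℝ} (hT : ∀ k, |T k| ≤ 1)
    {i j : ι} (hij : i ≠ j) : |∏ k, T k| ≤ |T i| * |T j| := by
  classical
  have hrest : ∏ k ∈ (Finset.univ.erase i).erase j, |T k| ≤ 1 :=
    Finset.prod_le_one (fun k _ => abs_nonneg _) (fun k _ => hT k)
  rw [Finset.abs_prod, ← Finset.mul_prod_erase _ _ (Finset.mem_univ i),
    ← Finset.mul_prod_erase _ _ (Finset.mem_erase.2 ⟨hij.symm, Finset.mem_univ j⟩), ← mul_assoc]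
  exact mul_le_of_le_one_right (by positivity) hrest

lemma abs_prod_add_abs_prod_add_abs_prod_le_one {ι : Type*} [Fintype ι]
    (hι : 1 < Fintype.card ι) {Z X Y : ι → ℝ} (h : ∀ k, Z k ^ 2 + X k ^ 2 + Y k ^ 2 ≤ 1) :
    |∏ k, Z k| + |∏ k, X k| + |∏ k, Y k| ≤ 1 := by
  obtain ⟨i, j, hij⟩ := Fintype.exists_pair_of_one_lt_card hι
  have hprod (T : ι → ℝ) (hT : ∀ k, T k ^ 2 ≤ 1) : |∏ k, T k| ≤ |T i| * |T j| :=
    abs_prod_le_abs_mul_abs (fun k => (sq_le_one_iff_abs_le_one _).1 (hT k)) hij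
  have hZ := hprod Z fun k => by nlinarith [h k]
  have hX := hprod X fun k => by nlinarith [h k]
  have hY := hprod Y fun k => by nlinarith [h k]
  nlinarith [h i, h j, sq_nonneg (|Z i| - |Z j|), sq_nonneg (|X i| - |X j|),
    sq_nonneg (|Y i| - |Y j|), sq_abs (Z i), sq_abs (Z j), sq_abs (X i), sq_abs (X j),
    sq_abs (Y i), sq_abs (Y j)]

def reTraceMul {n : Type*} [Fintype n] (σ : Matrix n n ℂ) : Matrix n n ℂ →ₗ[ℝ] ℝ :=
  Complex.reLm ∘ₗ traceLinearMap n ℝ ℂ ∘ₗ LinearMap.mulRight ℝ σ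

@[simp]
lemma reTraceMul_apply {n : Type*} [Fintype n] (σ M : Matrix n n ℂ) :
    reTraceMul σ M = (M * σ).trace.re := rfl

lemma convex_setOf_abs_add_abs_add_abs_le {E : Type*} [AddCommGroup E] [Module ℝ E]
    (ℓ₁ ℓ₂ ℓ₃ : E →ₗ[ℝ] ℝ) (r : ℝ) : Convex ℝ {x | |ℓ₁ x| + |ℓ₂ x| + |ℓ₃ x| ≤ r} := by
  have h (ℓ : E →ₗ[ℝ] ℝ) : ConvexOn ℝ Set.univ fun x => |ℓ x| :=
    (convexOn_norm convex_univ).comp_linearMap ℓ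
  simpa using (((h ℓ₁).add (h ℓ₂)).add (h ℓ₃)).convex_le r

variable {ι : Type*} [Fintype ι] [DecidableEq ι]

lemma abs_add_abs_add_abs_le_one_of_mem_productStates (hι : 1 < Fintype.card ι)
    {M : Matrix (ι → Fin 2) (ι → Fin 2) ℂ} (hM : M ∈ productStates ι (Fin 2)) :
    |reTraceMul (piKron fun _ => pauliZ) M| + |reTraceMul (piKron fun _ => pauliX) M|
      + |reTraceMul (piKron fun _ => pauliY) M| ≤ 1 := by
  obtain ⟨v, hv, rfl⟩ := hM
  have hbound (σ : Matrix (Fin 2) (Fin 2) ℂ) :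
      |reTraceMul (piKron fun _ => σ) (piKron fun j => vecMulVec (v j) (star (v j)))|
        ≤ |∏ j, ‖(vecMulVec (v j) (star (v j)) * σ).trace‖| := by
    rw [reTraceMul_apply, piKron_mul_piKron, trace_piKron, ← norm_prod]
    exact (Complex.abs_re_le_norm _).trans (le_abs_self _)
  refine (add_le_add_three (hbound _) (hbound _) (hbound _)).trans
    (abs_prod_add_abs_prod_add_abs_prod_le_one hι fun j => ?_)
  rw [norm_sq_trace_vecMulVec_mul_pauli, hv j, one_pow]

lemma abs_add_abs_add_abs_le_one_of_mem_convexHull (hι : 1 < Fintype.card ι)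
    {M : Matrix (ι → Fin 2) (ι → Fin 2) ℂ} (hM : M ∈ convexHull ℝ (productStates ι (Fin 2))) :
    |reTraceMul (piKron fun _ => pauliZ) M| + |reTraceMul (piKron fun _ => pauliX) M|
      + |reTraceMul (piKron fun _ => pauliY) M| ≤ 1 :=
  convexHull_min (fun _ => abs_add_abs_add_abs_le_one_of_mem_productStates hι)
    (convex_setOf_abs_add_abs_add_abs_le _ _ _ 1) hM

lemma trace_smolinState_mul_kronPow_pauli {N : ℕ} (hN : N ≠ 0) (a b c : ℝ) :
    (smolinState N a b c * kronPow pauliZ).trace = (a : ℂ) ∧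
      (smolinState N a b c * kronPow pauliX).trace = (b : ℂ) ∧
      (smolinState N a b c * kronPow pauliY).trace = (c : ℂ) := by
  simp only [smolinState, smul_mul, add_mul, trace_smul, trace_add, kronPow_eq_piKron,
    piKron_mul_piKron, trace_piKron]
  norm_num [pauliZ, pauliX, pauliY, trace_fin_two, hN]
  refine ⟨?_, ?_, ?_⟩ <;> field_simp

lemma abs_add_abs_add_abs_le_one_of_smolinState_mem {N : ℕ} (hN : 2 ≤ N) {a b c : ℝ}
    (h : smolinState N a b c ∈ convexHull ℝ (productStates (Fin N) (Fin 2))) :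
    |a| + |b| + |c| ≤ 1 := by
  have hcorr := abs_add_abs_add_abs_le_one_of_mem_convexHull (by rw [Fintype.card_fin]; omega) h
  obtain ⟨hz, hx, hy⟩ := trace_smolinState_mul_kronPow_pauli (N := N) (by omega) a b c
  simpa only [reTraceMul_apply, ← kronPow_eq_piKron, hz, hx, hy, Complex.ofReal_re] using hcorr

end Necessity

section Sufficiency

/-- `σ` has eigenvalues `1, -1` with orthonormal eigenvectors `w 0, w 1`, as every Pauli matrix
does. -/
def IsSpinObservable (σ : Matrix (Fin 2) (Fin 2) ℂ) : Prop :=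
  ∃ w : Fin 2 → Fin 2 → ℂ, (∀ s, ∑ i, ‖w s i‖ ^ 2 = 1) ∧
    vecMulVec (w 0) (star (w 0)) + vecMulVec (w 1) (star (w 1)) = 1 ∧
    vecMulVec (w 0) (star (w 0)) - vecMulVec (w 1) (star (w 1)) = σ

lemma IsSpinObservable.smul_kronPow_one_add_mem_convexHull {σ : Matrix (Fin 2) (Fin 2) ℂ}
    (hσ : IsSpinObservable σ) {N : ℕ} (hN : N ≠ 0) {ε : ℝ} (hε : |ε| ≤ 1) :
    ((2 : ℝ) ^ N)⁻¹ • (kronPow 1 + ε • kronPow σ) ∈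
      convexHull ℝ (productStates (Fin N) (Fin 2)) := by
  obtain ⟨w, hw, hsum, hdiff⟩ := hσ
  set P : Fin 2 → Matrix (Fin 2) (Fin 2) ℂ := fun s => vecMulVec (w s) (star (w s))
  set χ : Fin 2 → ℝ := ![1, -1]
  have hχ (s : Fin 2) : |χ s| = 1 := by fin_cases s <;> simp [χ]
  have hone : ∑ s, P s = 1 := by simpa [Fin.sum_univ_two] using hsum
  have hσ : ∑ s, χ s • P s = σ := by simpa [Fin.sum_univ_two, χ, ← sub_eq_add_neg] using hdiff
  set μ : (Fin N → Fin 2) → ℝ := fun f => ((2 : ℝ) ^ N)⁻¹ * (1 + ε * ∏ j, χ (f j))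
  have hexpand : ((2 : ℝ) ^ N)⁻¹ • (kronPow 1 + ε • kronPow σ)
      = ∑ f : Fin N → Fin 2, μ f • piKron fun j => P (f j) := by
    simp only [kronPow_eq_piKron, ← hone, ← hσ, piKron_sum, piKron_smul, Finset.smul_sum,
      ← Finset.sum_add_distrib, μ, mul_add, add_smul, smul_add, mul_one, smul_smul]
  have hμ_nonneg (f : Fin N → Fin 2) : 0 ≤ μ f := by
    have : |ε * ∏ j, χ (f j)| ≤ 1 := by simpa [abs_mul, Finset.abs_prod, hχ] using hε
    exact mul_nonneg (by positivity) (by linarith [neg_le_of_abs_le this])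
  have hμ_sum : ∑ f, μ f = 1 := by
    have hχ_sum : ∑ s, χ s = 0 := by simp [χ]
    simp only [μ, ← Finset.mul_sum, Finset.sum_add_distrib, ← Fintype.prod_sum, hχ_sum]
    simp [hN]
  rw [hexpand]
  refine (convex_convexHull ℝ _).sum_mem (fun f _ => hμ_nonneg f) hμ_sum fun f _ => ?_
  exact subset_convexHull ℝ _ ⟨fun j => w (f j), fun j => hw (f j), rfl⟩

lemma ofReal_inv_sqrt_two_sq : ((((√2)⁻¹ : ℝ) : ℂ)) ^ 2 = 2⁻¹ := by
  rw [← Complex.ofReal_pow, inv_pow, Real.sq_sqrt zero_le_two]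
  norm_num

lemma isSpinObservable_pauliZ : IsSpinObservable pauliZ := by
  refine ⟨![![1, 0], ![0, 1]], fun s => by fin_cases s <;> simp, ?_, ?_⟩ <;>
    ext i j <;> fin_cases i <;> fin_cases j <;>
    simp only [Matrix.add_apply, Matrix.sub_apply, vecMulVec_apply, Pi.star_apply] <;>
    simp [pauliZ]

lemma isSpinObservable_pauliX : IsSpinObservable pauliX := by
  set r : ℂ := (((√2)⁻¹ : ℝ) : ℂ)
  have hc : conj r = r := Complex.conj_ofReal _
  have hr : r ^ 2 = 2⁻¹ := ofReal_inv_sqrt_two_sq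
  refine ⟨![![r, r], ![r, -r]], fun s => ?_, ?_, ?_⟩
  · fin_cases s <;> norm_num [r]
  all_goals ext i j; fin_cases i <;> fin_cases j <;>
    simp only [Matrix.add_apply, Matrix.sub_apply, vecMulVec_apply, Pi.star_apply] <;>
    simp [pauliX, hc] <;> ring_nf <;> norm_num [hr]

lemma isSpinObservable_pauliY : IsSpinObservable pauliY := by
  set r : ℂ := (((√2)⁻¹ : ℝ) : ℂ)
  have hc : conj r = r := Complex.conj_ofReal _
  have hr : r ^ 2 = 2⁻¹ := ofReal_inv_sqrt_two_sq
  refine ⟨![![r, r * Complex.I], ![r, -(r * Complex.I)]], fun s => ?_, ?_, ?_⟩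
  · fin_cases s <;> norm_num [r]
  all_goals ext i j; fin_cases i <;> fin_cases j <;>
    simp only [Matrix.add_apply, Matrix.sub_apply, vecMulVec_apply, Pi.star_apply] <;>
    simp [pauliY, hc] <;> ring_nf <;> norm_num [hr] <;> ring

lemma smolinState_mem_convexHull {N : ℕ} (hN : N ≠ 0) {a b c : ℝ} (h : |a| + |b| + |c| ≤ 1) :
    smolinState N a b c ∈ convexHull ℝ (productStates (Fin N) (Fin 2)) := by
  have hsign (x : ℝ) : |(SignType.sign x : ℝ)| ≤ 1 := by
    rcases (SignType.sign x).trichotomy with hx | hx | hx <;> simp [hx]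
  have h₀ := isSpinObservable_pauliZ.smul_kronPow_one_add_mem_convexHull hN (ε := 0) (by simp)
  have hz := isSpinObservable_pauliZ.smul_kronPow_one_add_mem_convexHull hN (hsign a)
  have hx := isSpinObservable_pauliX.smul_kronPow_one_add_mem_convexHull hN (hsign b)
  have hy := isSpinObservable_pauliY.smul_kronPow_one_add_mem_convexHull hN (hsign c)
  have hcomb : smolinState N a b c
      = (1 - |a| - |b| - |c|) • (((2 : ℝ) ^ N)⁻¹ • (kronPow 1 + (0 : ℝ) • kronPow pauliZ))
        + |a| • (((2 : ℝ) ^ N)⁻¹ • (kronPow 1 + (SignType.sign a : ℝ) • kronPow pauliZ))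
        + |b| • (((2 : ℝ) ^ N)⁻¹ • (kronPow 1 + (SignType.sign b : ℝ) • kronPow pauliX))
        + |c| • (((2 : ℝ) ^ N)⁻¹ • (kronPow 1 + (SignType.sign c : ℝ) • kronPow pauliY)) := by
    have h2 : ((2 : ℂ) ^ N)⁻¹ = (((2 : ℝ) ^ N)⁻¹ : ℝ) := by push_cast; rfl
    rw [smolinState, h2]
    simp only [Complex.coe_smul]
    linear_combination (norm := module)
      (abs_mul_sign a).symm • (((2 : ℝ) ^ N)⁻¹ • kronPow (N := N) pauliZ)
      + (abs_mul_sign b).symm • (((2 : ℝ) ^ N)⁻¹ • kronPow (N := N) pauliX)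
      + (abs_mul_sign c).symm • (((2 : ℝ) ^ N)⁻¹ • kronPow (N := N) pauliY)
  have key := (convex_convexHull ℝ (productStates (Fin N) (Fin 2))).sum_mem
    (t := Finset.univ) (w := ![1 - |a| - |b| - |c|, |a|, |b|, |c|])
    (fun i _ => by fin_cases i <;> simp [sub_sub, h])
    (by simp [Fin.sum_univ_four]; ring) (z := ![_, _, _, _])
    (fun i _ => by fin_cases i; exacts [h₀, hz, hx, hy])
  simpa [hcomb, Fin.sum_univ_four] using key

end Sufficiency

end

end GeneralizedSmolin

/-- The generalized Smolin state
`ρ = 2^{-N}(σ₀^{⊗N} + a σz^{⊗N} + b σx^{⊗N} + c σy^{⊗N})` is fully separable,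
i.e. a convex mixture of pure product states, if and only if
`|a| + |b| + |c| ≤ 1`. -/
theorem generalized_smolin_separable_iff
    (N : ℕ) (hN : 2 ≤ N)
    (σ₀ σz σx σy : Matrix (Fin 2) (Fin 2) ℂ)
    (h₀ : σ₀ = 1) (hz : σz = !![1, 0; 0, -1]) (hx : σx = !![0, 1; 1, 0])
    (hy : σy = !![0, -Complex.I; Complex.I, 0])
    (a b c : ℝ)
    (ρ : Matrix (Fin N → Fin 2) (Fin N → Fin 2) ℂ)
    (hρ : ρ = ((2 : ℂ) ^ N)⁻¹ •
      (kronPow σ₀ + (a : ℂ) • kronPow σz + (b : ℂ) • kronPow σx +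
        (c : ℂ) • kronPow σy)) :
    ρ ∈ convexHull ℝ {M : Matrix (Fin N → Fin 2) (Fin N → Fin 2) ℂ |
        ∃ v : Fin N → Fin 2 → ℂ,
          (∀ j, ∑ i, ‖v j i‖ ^ 2 = 1) ∧
          M = Matrix.of fun f g => ∏ j, v j (f j) * conj (v j (g j))} ↔
      |a| + |b| + |c| ≤ 1 := by
  subst h₀ hz hx hy hρ
  exact ⟨GeneralizedSmolin.abs_add_abs_add_abs_le_one_of_smolinState_mem hN,
    GeneralizedSmolin.smolinState_mem_convexHull (by omega)⟩
end

section
/- Let σ₀ = I₂ and σy = [[0,−i],[i,0]], and consider the two-qubit state ρ = (1/4)·(σ₀⊗σ₀ + σy⊗σy), where ⊗ is the Kronecker product. Then: (i) ρ = (1/2)·P₊⊗P₊ + (1/2)·P₋⊗P₋, where P_± = (σ₀ ± σy)/2 are the rank-one projectors onto the eigenvectors of σy, so ρ is separable over ℂ; and (ii) ρ does not belong to the real linear span of the set {(aa^T)⊗(bb^T) : a, b ∈ ℝ²} of Kronecker products of projectors onto real vectors, because trace(M·(σy⊗σy)) = 0 for every M in that span while trace(ρ·(σy⊗σy)) = 1.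 -/
open scoped Kronecker

/-- The Caves–Fuchs–Rungta rebit bound entangled state
`ρ = (σ₀⊗σ₀ + σy⊗σy)/4`: it is separable over ℂ, being the equal mixture of
`P₊⊗P₊` and `P₋⊗P₋` with `P± = (σ₀ ± σy)/2`, but it does not lie in the real
linear span of Kronecker products of projectors onto real vectors, since every
element of that span has vanishing trace against `σy⊗σy` while
`trace(ρ·(σy⊗σy)) = 1`. -/
theorem rebit_bound_entangled_state
    (σ₀ σy : Matrix (Fin 2) (Fin 2) ℂ)
    (h₀ : σ₀ = 1) (hy : σy = !![0, -Complex.I; Complex.I, 0])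
    (ρ : Matrix (Fin 2 × Fin 2) (Fin 2 × Fin 2) ℂ)
    (hρ : ρ = (1 / 4 : ℂ) • (σ₀ ⊗ₖ σ₀ + σy ⊗ₖ σy))
    (Pp Pm : Matrix (Fin 2) (Fin 2) ℂ)
    (hPp : Pp = (1 / 2 : ℂ) • (σ₀ + σy)) (hPm : Pm = (1 / 2 : ℂ) • (σ₀ - σy))
    (RealSpan : Submodule ℝ (Matrix (Fin 2 × Fin 2) (Fin 2 × Fin 2) ℂ))
    (hRS : RealSpan = Submodule.span ℝ
      {M : Matrix (Fin 2 × Fin 2) (Fin 2 × Fin 2) ℂ |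
        ∃ a b : Fin 2 → ℝ,
          M = (Matrix.of fun i j => ((a i * a j : ℝ) : ℂ)) ⊗ₖ
              (Matrix.of fun k l => ((b k * b l : ℝ) : ℂ))}) :
    ρ = (1 / 2 : ℂ) • (Pp ⊗ₖ Pp) + (1 / 2 : ℂ) • (Pm ⊗ₖ Pm) ∧
    (∀ M ∈ RealSpan, Matrix.trace (M * (σy ⊗ₖ σy)) = 0) ∧
    Matrix.trace (ρ * (σy ⊗ₖ σy)) = 1 ∧
    ρ ∉ RealSpan := by
  subst h₀ hy hρ hPp hPm hRS
  have hzero : ∀ M ∈ Submodule.span ℝ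
      {M : Matrix (Fin 2 × Fin 2) (Fin 2 × Fin 2) ℂ |
        ∃ a b : Fin 2 → ℝ,
          M = (Matrix.of fun i j => ((a i * a j : ℝ) : ℂ)) ⊗ₖ
              (Matrix.of fun k l => ((b k * b l : ℝ) : ℂ))},
      Matrix.trace (M * ((!![0, -Complex.I; Complex.I, 0]) ⊗ₖ
        (!![0, -Complex.I; Complex.I, 0]))) = 0 := by
    intro M hM
    induction hM using Submodule.span_induction with
    | mem x hx =>
      obtain ⟨a, b, rfl⟩ := hx
      simp [Matrix.trace, Matrix.diag, Matrix.mul_apply, Matrix.kroneckerMap_apply,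
        Fintype.sum_prod_type, Fin.sum_univ_two, Matrix.one_apply]
      ring
    | zero => simp
    | add x y _ _ hx hy => rw [add_mul, Matrix.trace_add, hx, hy, add_zero]
    | smul c x _ hx =>
      rw [Matrix.smul_mul, Matrix.trace_smul, hx, smul_zero]
  have htr : Matrix.trace (((1 / 4 : ℂ) • ((1 : Matrix (Fin 2) (Fin 2) ℂ) ⊗ₖ 1 +
      (!![0, -Complex.I; Complex.I, 0]) ⊗ₖ (!![0, -Complex.I; Complex.I, 0]))) *
      ((!![0, -Complex.I; Complex.I, 0]) ⊗ₖ (!![0, -Complex.I; Complex.I, 0]))) = 1 := by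
    simp [Matrix.trace, Matrix.diag, Matrix.mul_apply, Matrix.kroneckerMap_apply,
      Fintype.sum_prod_type, Fin.sum_univ_two, Matrix.one_apply]
    ring_nf
    try norm_num [Complex.I_sq]
  refine ⟨?_, hzero, htr, ?_⟩
  · ext ⟨i, k⟩ ⟨j, l⟩
    fin_cases i <;> fin_cases j <;> fin_cases k <;> fin_cases l <;>
      simp [Matrix.kroneckerMap_apply, Matrix.one_apply]
    all_goals try decide
    all_goals ring_nf
    all_goals simp [Complex.I_sq]
    all_goals try norm_num
  · intro h
    have := hzero _ h
    rw [htr] at this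
    exact one_ne_zero this
end
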